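/- arXiv:2603.28712 — 6 statements merged into one kernel-verified Lean document; each statement's English description precedes it below -/
import Mathlib

section
/- Let ρ be an n×n density matrix with positive semidefinite square root √ρ, and let P = {P_i} be a complete family of orthogonal projectors. Then 1 − Σ_i Tr[(P_i √ρ P_i)^2] = −(1/2) Σ_i Tr([√ρ, P_i]^2), where [A,B] = AB − BA; that is, C_{0.5,1}(ρ,P) equals the sum Σ_i I_{WY}(ρ, P_i) of the Wigner–Yanase skew informations I_{WY}(ρ,A) = −(1/2)Tr([√ρ, A]^2). -/
/-! For a single projector `p = p²`, expanding the square of the commutator and cycling the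
trace gives `Tr([√ρ, p]²) = 2 Tr((p √ρ p)²) - 2 Tr(ρ p)`, since `√ρ √ρ = ρ`. Summing over a
complete family, the terms `Tr(ρ Pᵢ)` add up to `Tr ρ = 1`. -/

open Matrix
open scoped ComplexOrder Classical

namespace BlockCoherence

variable {n : Type*} [Fintype n] [DecidableEq n]

/-- Real part of the trace of a complex matrix. -/
noncomputable def retr (A : Matrix n n ℂ) : ℝ := (Matrix.trace A).re

/-- A density matrix: positive semidefinite with trace 1. -/
def IsDensityMatrix (ρ : Matrix n n ℂ) : Prop := ρ.PosSemidef ∧ Matrix.trace ρ = 1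

/-- A complete family of orthogonal projectors. -/
def IsProjFamily {K : Type*} [Fintype K] (P : K → Matrix n n ℂ) : Prop :=
  (∀ k, (P k).IsHermitian) ∧ (∀ k, P k * P k = P k) ∧
    (∀ j k, j ≠ k → P j * P k = 0) ∧ (∑ k, P k = 1)

/-- Block dephasing map Δ(ρ) = Σ_k P_k ρ P_k. -/
noncomputable def deph {K : Type*} [Fintype K] (P : K → Matrix n n ℂ)
    (ρ : Matrix n n ℂ) : Matrix n n ℂ := ∑ k, P k * ρ * P k

/-- Block incoherent (free) states. -/
def IsBlockIncoherent {K : Type*} [Fintype K] (P : K → Matrix n n ℂ)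
    (σ : Matrix n n ℂ) : Prop := IsDensityMatrix σ ∧ σ = deph P σ

/-- A block-incoherent operation presented by its Kraus operators. -/
def IsBIOp {K : Type*} [Fintype K] {N : Type*} [Fintype N]
    (P : K → Matrix n n ℂ) (Kr : N → Matrix n n ℂ) : Prop :=
  (∑ m, (Kr m)ᴴ * Kr m = 1) ∧
    ∀ (m : N) (i j : K), i ≠ j → ∀ σ, IsBlockIncoherent P σ →
      P i * (Kr m * σ * (Kr m)ᴴ) * P j = 0

/-- The channel determined by Kraus operators. -/
noncomputable def krausApply {N : Type*} [Fintype N]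
    (Kr : N → Matrix n n ℂ) (ρ : Matrix n n ℂ) : Matrix n n ℂ :=
  ∑ m, Kr m * ρ * (Kr m)ᴴ

/-- A block coherence measure: conditions (B1)-(B4). -/
structure IsBlockCoherenceMeasure {K : Type*} [Fintype K] (P : K → Matrix n n ℂ)
    (C : Matrix n n ℂ → ℝ) : Prop where
  nonneg : ∀ ρ, IsDensityMatrix ρ → 0 ≤ C ρ
  eq_zero_iff : ∀ ρ, IsDensityMatrix ρ → (C ρ = 0 ↔ IsBlockIncoherent P ρ)
  monotone : ∀ ρ, IsDensityMatrix ρ → ∀ {N : Type} [Fintype N] (Kr : N → Matrix n n ℂ),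
    IsBIOp P Kr → C (krausApply Kr ρ) ≤ C ρ
  strong_monotone : ∀ ρ, IsDensityMatrix ρ → ∀ {N : Type} [Fintype N] (Kr : N → Matrix n n ℂ),
    IsBIOp P Kr →
      ∑ m, (if retr (Kr m * ρ * (Kr m)ᴴ) = 0 then (0 : ℝ) else
        retr (Kr m * ρ * (Kr m)ᴴ) *
          C ((retr (Kr m * ρ * (Kr m)ᴴ))⁻¹ • (Kr m * ρ * (Kr m)ᴴ))) ≤ C ρ
  convex : ∀ {N : Type} [Fintype N] (p : N → ℝ) (ρs : N → Matrix n n ℂ),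
    (∀ m, 0 ≤ p m) → ∑ m, p m = 1 → (∀ m, IsDensityMatrix (ρs m)) →
      C (∑ m, p m • ρs m) ≤ ∑ m, p m * C (ρs m)

/-- Real power of a matrix via the spectral functional calculus (0 on non-Hermitian input). -/
noncomputable def mpow (A : Matrix n n ℂ) (t : ℝ) : Matrix n n ℂ :=
  if hA : A.IsHermitian then
    (hA.eigenvectorUnitary : Matrix n n ℂ) *
      Matrix.diagonal (fun i => ((hA.eigenvalues i ^ t : ℝ) : ℂ)) *
      (star (hA.eigenvectorUnitary : Matrix n n ℂ))
  else 0

/-- Positive semidefinite square root (0 on non-PSD input). -/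
noncomputable def msqrt (A : Matrix n n ℂ) : Matrix n n ℂ :=
  if hA : A.PosSemidef then
    (hA.1.eigenvectorUnitary : Matrix n n ℂ) *
      Matrix.diagonal (fun i => ((Real.sqrt (hA.1.eigenvalues i) : ℝ) : ℂ)) *
      (star (hA.1.eigenvectorUnitary : Matrix n n ℂ))
  else 0

/-- Base-2 matrix logarithm via spectral calculus, with the convention log 0 = 0. -/
noncomputable def mlog2 (A : Matrix n n ℂ) : Matrix n n ℂ :=
  if hA : A.IsHermitian then
    (hA.eigenvectorUnitary : Matrix n n ℂ) *
      Matrix.diagonal (fun i => ((Real.logb 2 (hA.eigenvalues i) : ℝ) : ℂ)) *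
      (star (hA.eigenvectorUnitary : Matrix n n ℂ))
  else 0

/-- Trace norm ‖M‖_Tr = Tr √(MᴴM). -/
noncomputable def trNorm (M : Matrix n n ℂ) : ℝ :=
  retr (msqrt (Mᴴ * M))

/-- The α-z Rényi block coherence measure
`C_{α,z}(ρ,P) = 1 - (max_{σ∈I_B} Tr[(σ^{(1-α)/(2z)} ρ^{α/z} σ^{(1-α)/(2z)})^z])^{1/α}`. -/
noncomputable def Caz {K : Type*} [Fintype K] (α z : ℝ) (P : K → Matrix n n ℂ)
    (ρ : Matrix n n ℂ) : ℝ :=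
  1 - (sSup {x : ℝ | ∃ σ, IsBlockIncoherent P σ ∧
    x = retr (mpow (mpow σ ((1 - α) / (2 * z)) * mpow ρ (α / z) *
      mpow σ ((1 - α) / (2 * z))) z)}) ^ (1 / α)

theorem msqrt_eq_cfc {A : Matrix n n ℂ} (hA : A.PosSemidef) : msqrt A = cfc Real.sqrt A := by
  rw [msqrt, dif_pos hA, hA.1.cfc_eq, IsHermitian.cfc, Unitary.conjStarAlgAut_apply]
  rfl

theorem msqrt_mul_self {A : Matrix n n ℂ} (hA : A.PosSemidef) : msqrt A * msqrt A = A := by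
  have hspec : ∀ x ∈ spectrum ℝ A, 0 ≤ x := by
    rw [hA.1.spectrum_real_eq_range_eigenvalues]
    rintro - ⟨i, rfl⟩
    exact hA.eigenvalues_nonneg i
  rw [msqrt_eq_cfc hA, ← cfc_mul _ _ A]
  conv_rhs => rw [← cfc_id' ℝ A hA.1.isSelfAdjoint]
  exact cfc_congr fun x hx => Real.mul_self_sqrt (hspec x hx)

theorem trace_commutator_mul_self_of_isIdempotentElem {m R : Type*} [Fintype m] [CommRing R]
    (s p : Matrix m m R) (hp : IsIdempotentElem p) :
    trace ((s * p - p * s) * (s * p - p * s)) =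
      2 * trace ((p * s * p) * (p * s * p)) - 2 * trace (s * s * p) := by
  have hpp : p * p = p := hp
  have hcross₁ : trace (s * p * (p * s)) = trace (s * s * p) := by
    rw [← mul_assoc, mul_assoc s p p, hpp, trace_mul_cycle, mul_assoc]
  have hcross₂ : trace (p * s * (s * p)) = trace (s * s * p) := by
    rw [trace_mul_comm, mul_assoc, ← mul_assoc p p, hpp, ← mul_assoc, trace_mul_cycle]
  have hsquare : trace (p * s * (p * s)) = trace (s * p * (s * p)) :=
    calc trace (p * s * (p * s)) = trace (p * (s * p * s)) := by simp only [mul_assoc]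
      _ = trace (s * p * s * p) := trace_mul_comm _ _
      _ = trace (s * p * (s * p)) := by simp only [mul_assoc]
  have hcompress : trace (p * s * p * (p * s * p)) = trace (s * p * (s * p)) :=
    calc trace (p * s * p * (p * s * p)) = trace (p * (s * (p * p) * s * p)) := by
          simp only [mul_assoc]
      _ = trace (s * p * s * p * p) := by rw [hpp, trace_mul_comm]
      _ = trace (s * p * (s * p)) := by rw [mul_assoc _ p p, hpp]; simp only [mul_assoc]
  rw [sub_mul, mul_sub, mul_sub, trace_sub, trace_sub, trace_sub, hcross₁, hcross₂, hsquare,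
    hcompress]
  ring

theorem sum_trace_mul_eq_trace {K R : Type*} [Fintype K] [CommRing R]
    (ρ : Matrix n n R) (P : K → Matrix n n R) (hP : ∑ k, P k = 1) :
    ∑ k, trace (ρ * P k) = trace ρ := by
  rw [← trace_sum, ← Finset.mul_sum, hP, mul_one]

/-- `C_{0.5,1}(ρ,P) = 1 - Σ_i Tr[(P_i √ρ P_i)²]` equals the sum of
the Wigner-Yanase skew informations `-(1/2) Tr([√ρ, P_i]²)`. -/
theorem Caz_half_one_eq_sum_skewInformation
    {K : Type*} [Fintype K]
    (P : K → Matrix n n ℂ) (hP : IsProjFamily P)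
    (ρ : Matrix n n ℂ) (hρ : IsDensityMatrix ρ) :
    1 - ∑ i, retr ((P i * msqrt ρ * P i) * (P i * msqrt ρ * P i)) =
      ∑ i, -(1 / 2) * retr ((msqrt ρ * P i - P i * msqrt ρ) *
        (msqrt ρ * P i - P i * msqrt ρ)) := by
  obtain ⟨-, hIdem, -, hSum⟩ := hP
  have hskew (i : K) : -(1 / 2) * retr ((msqrt ρ * P i - P i * msqrt ρ) *
      (msqrt ρ * P i - P i * msqrt ρ)) =
        retr (ρ * P i) - retr ((P i * msqrt ρ * P i) * (P i * msqrt ρ * P i)) := by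
    rw [retr, trace_commutator_mul_self_of_isIdempotentElem _ _ (hIdem i), msqrt_mul_self hρ.1]
    simp only [retr, Complex.sub_re, Complex.mul_re, Complex.re_ofNat, Complex.im_ofNat, zero_mul,
      sub_zero]
    ring
  have htrace : ∑ i, retr (ρ * P i) = 1 := by
    simp only [retr, ← Complex.re_sum, sum_trace_mul_eq_trace ρ P hSum, hρ.2, Complex.one_re]
  rw [Finset.sum_congr rfl fun i _ => hskew i, Finset.sum_sub_distrib, htrace]

end BlockCoherence
end

section
/- Let P = {P_k} be a complete family of orthogonal projectors, α ∈ (0,1), z ≥ max{α,1−α}, and let U be a unitary matrix satisfying U = Δ(U) (i.e., U = Σ_k P_k U P_k). Then for every density matrix ρ, C_{α,z}(UρU†, P) ≤ C_{α,z}(ρ, P). -/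
open Matrix
open scoped ComplexOrder Classical

namespace BlockCoherence

variable {n : Type*} [Fintype n]

lemma deph_conj_of_commute {K : Type*} [Fintype K] {P : K → Matrix n n ℂ} {U V : Matrix n n ℂ}
    (hU : ∀ k, Commute (P k) U) (hV : ∀ k, Commute (P k) V) (X : Matrix n n ℂ) :
    deph P (U * X * V) = U * deph P X * V := by
  simp only [deph, Finset.mul_sum, Finset.sum_mul]
  refine Finset.sum_congr rfl fun k _ => ?_
  rw [← mul_assoc, ← mul_assoc, (hU k).eq, mul_assoc _ V, ← (hV k).eq]
  simp only [mul_assoc]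

variable [DecidableEq n]

lemma mpow_eq_cfc (A : Matrix n n ℂ) (t : ℝ) : mpow A t = cfc (· ^ t : ℝ → ℝ) A := by
  by_cases hA : A.IsHermitian
  · rw [mpow, dif_pos hA, hA.cfc_eq]
    rfl
  · rw [mpow, dif_neg hA]
    exact (cfc_apply_of_not_predicate A (show ¬ IsSelfAdjoint A from hA)).symm

lemma mpow_unitary_conj {U : Matrix n n ℂ} (hU : U ∈ unitaryGroup n ℂ) (A : Matrix n n ℂ)
    (t : ℝ) : mpow (U * A * Uᴴ) t = U * mpow A t * Uᴴ := by
  let φ := Unitary.conjStarAlgAut ℂ (Matrix n n ℂ) ⟨U, hU⟩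
  change mpow (φ A) t = φ (mpow A t)
  rw [mpow_eq_cfc, mpow_eq_cfc]
  by_cases hA : IsSelfAdjoint A
  · -- the spectrum is finite, so no sign condition on `t` is needed for continuity
    exact (StarAlgHomClass.map_cfc φ _ A (A.finite_real_spectrum.continuousOn _)
      (LinearMap.continuous_of_finiteDimensional φ.toAlgEquiv.toLinearMap) hA (hA.map φ)).symm
  · have hφA : ¬ IsSelfAdjoint (φ A) := fun h => hA (by simpa using h.map φ.symm)
    rw [cfc_apply_of_not_predicate _ hA, cfc_apply_of_not_predicate _ hφA, map_zero]

lemma unitary_conj_mul_unitary_conj {U : Matrix n n ℂ} (hU : U ∈ unitaryGroup n ℂ)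
    (A B : Matrix n n ℂ) : U * A * Uᴴ * (U * B * Uᴴ) = U * (A * B) * Uᴴ :=
  (map_mul (Unitary.conjStarAlgAut ℂ (Matrix n n ℂ) ⟨U, hU⟩) A B).symm

lemma retr_unitary_conj {U : Matrix n n ℂ} (hU : U ∈ unitaryGroup n ℂ) (A : Matrix n n ℂ) :
    retr (U * A * Uᴴ) = retr A := by
  rw [retr, trace_mul_cycle, ← star_eq_conjTranspose, mem_unitaryGroup_iff'.mp hU, one_mul, retr]

lemma IsDensityMatrix.unitary_conj {ρ U : Matrix n n ℂ} (hρ : IsDensityMatrix ρ)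
    (hU : U ∈ unitaryGroup n ℂ) : IsDensityMatrix (U * ρ * Uᴴ) :=
  ⟨hρ.1.mul_mul_conjTranspose_same U, by
    rw [trace_mul_cycle, ← star_eq_conjTranspose, mem_unitaryGroup_iff'.mp hU, one_mul, hρ.2]⟩

/-- The sandwiched quantity `Q_{α,z}(ρ‖σ) = Tr (σ^{(1-α)/2z} ρ^{α/z} σ^{(1-α)/2z})^z`. -/
noncomputable def alphaZTrace (α z : ℝ) (ρ σ : Matrix n n ℂ) : ℝ :=
  retr (mpow (mpow σ ((1 - α) / (2 * z)) * mpow ρ (α / z) * mpow σ ((1 - α) / (2 * z))) z)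

lemma alphaZTrace_unitary_conj {U : Matrix n n ℂ} (hU : U ∈ unitaryGroup n ℂ)
    (α z : ℝ) (ρ σ : Matrix n n ℂ) :
    alphaZTrace α z (U * ρ * Uᴴ) (U * σ * Uᴴ) = alphaZTrace α z ρ σ := by
  simp only [alphaZTrace, mpow_unitary_conj hU, unitary_conj_mul_unitary_conj hU,
    retr_unitary_conj hU]

section

variable {K : Type*} [Fintype K] {P : K → Matrix n n ℂ}

lemma IsProjFamily.mul_deph (hP : IsProjFamily P) (X : Matrix n n ℂ) (k : K) :
    P k * deph P X = P k * X * P k := by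
  rw [deph, Finset.mul_sum, Finset.sum_eq_single k]
  · rw [← mul_assoc, ← mul_assoc, hP.2.1 k]
  · intro j _ hjk
    rw [← mul_assoc, ← mul_assoc, hP.2.2.1 k j (Ne.symm hjk), zero_mul, zero_mul]
  · simp

lemma IsProjFamily.deph_mul (hP : IsProjFamily P) (X : Matrix n n ℂ) (k : K) :
    deph P X * P k = P k * X * P k := by
  rw [deph, Finset.sum_mul, Finset.sum_eq_single k]
  · rw [mul_assoc, hP.2.1 k]
  · intro j _ hjk
    rw [mul_assoc, hP.2.2.1 j k hjk, mul_zero]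
  · simp

lemma IsProjFamily.commute_of_eq_deph (hP : IsProjFamily P) {U : Matrix n n ℂ}
    (hU : U = deph P U) (k : K) : Commute (P k) U := by
  rw [Commute, SemiconjBy, hU, hP.mul_deph, hP.deph_mul]

lemma IsProjFamily.commute_conjTranspose (hP : IsProjFamily P) {U : Matrix n n ℂ} {k : K}
    (hU : Commute (P k) U) : Commute (P k) Uᴴ := by
  simpa only [star_eq_conjTranspose, (hP.1 k).eq] using hU.star_star

lemma IsBlockIncoherent.unitary_conj {σ U : Matrix n n ℂ} (hσ : IsBlockIncoherent P σ)
    (hU : U ∈ unitaryGroup n ℂ) (hUP : ∀ k, Commute (P k) U) (hUP' : ∀ k, Commute (P k) Uᴴ) :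
    IsBlockIncoherent P (U * σ * Uᴴ) :=
  ⟨hσ.1.unitary_conj hU, by rw [deph_conj_of_commute hUP hUP', ← hσ.2]⟩

lemma image_unitary_conj_setOf_isBlockIncoherent {U : Matrix n n ℂ} (hU : U ∈ unitaryGroup n ℂ)
    (hUP : ∀ k, Commute (P k) U) (hUP' : ∀ k, Commute (P k) Uᴴ) :
    (fun σ => U * σ * Uᴴ) '' {σ | IsBlockIncoherent P σ} = {σ | IsBlockIncoherent P σ} := by
  refine (Set.image_subset_iff.2 fun σ hσ => hσ.unitary_conj hU hUP hUP').antisymm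
    fun σ hσ => ⟨Uᴴ * σ * U, ?_, ?_⟩
  · simpa only [conjTranspose_conjTranspose, Set.mem_ofPred_eq] using
      hσ.unitary_conj (U := Uᴴ) (Unitary.star_mem hU) hUP'
        (by simpa only [conjTranspose_conjTranspose] using hUP)
  · have hUU : U * Uᴴ = 1 := mem_unitaryGroup_iff.mp hU
    simp only [← mul_assoc, hUU, one_mul]
    rw [mul_assoc, hUU, mul_one]

lemma Caz_eq_one_sub_sSup_image (α z : ℝ) (ρ : Matrix n n ℂ) :
    Caz α z P ρ = 1 - sSup (alphaZTrace α z ρ '' {σ | IsBlockIncoherent P σ}) ^ (1 / α) := by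
  simp only [Caz, Set.image, alphaZTrace, Set.mem_ofPred_eq, eq_comm]

lemma Caz_unitary_conj {U : Matrix n n ℂ} (hU : U ∈ unitaryGroup n ℂ)
    (hUP : ∀ k, Commute (P k) U) (hUP' : ∀ k, Commute (P k) Uᴴ)
    (α z : ℝ) (ρ : Matrix n n ℂ) : Caz α z P (U * ρ * Uᴴ) = Caz α z P ρ := by
  rw [Caz_eq_one_sub_sSup_image, Caz_eq_one_sub_sSup_image]
  conv_lhs => rw [← image_unitary_conj_setOf_isBlockIncoherent hU hUP hUP', Set.image_image]
  simp only [alphaZTrace_unitary_conj hU]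

end

theorem Caz_conj_blockDiagonal_unitary_le_general
    {K : Type*} [Fintype K]
    (P : K → Matrix n n ℂ) (hP : IsProjFamily P)
    (α z : ℝ)
    (U : Matrix n n ℂ) (hU : U ∈ Matrix.unitaryGroup n ℂ) (hUdeph : U = deph P U)
    (ρ : Matrix n n ℂ) :
    Caz α z P (U * ρ * Uᴴ) ≤ Caz α z P ρ := by
  have hUP : ∀ k, Commute (P k) U := hP.commute_of_eq_deph hUdeph
  exact (Caz_unitary_conj hU hUP (fun k => hP.commute_conjTranspose (hUP k)) α z ρ).le

/-- if `U` is unitary and block diagonal (`U = Δ(U)`), then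
`C_{α,z}(UρU†,P) ≤ C_{α,z}(ρ,P)`. -/
theorem Caz_conj_blockDiagonal_unitary_le
    {K : Type*} [Fintype K]
    (P : K → Matrix n n ℂ) (hP : IsProjFamily P)
    (α z : ℝ) (hα : α ∈ Set.Ioo (0 : ℝ) 1) (hz : max α (1 - α) ≤ z)
    (U : Matrix n n ℂ) (hU : U ∈ Matrix.unitaryGroup n ℂ) (hUdeph : U = deph P U)
    (ρ : Matrix n n ℂ) (hρ : IsDensityMatrix ρ) :
    Caz α z P (U * ρ * Uᴴ) ≤ Caz α z P ρ :=
  Caz_conj_blockDiagonal_unitary_le_general P hP α z U hU hUdeph ρ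

end BlockCoherence
end

section
/- Let {P₁, P₂} be a complete family of two orthogonal projectors (P₁ + P₂ = I, P₁P₂ = 0), Δ(ρ) = P₁ρP₁ + P₂ρP₂, and for a density matrix ρ define the trace-norm block coherence C_Tr(ρ) = inf{ ‖ρ − λσ‖_Tr : λ > 0, σ block-incoherent density matrix }, where ‖M‖_Tr = Tr√(M†M). Then C_Tr(ρ) ≤ ‖P₁ρP₂‖_Tr + ‖P₂ρP₁‖_Tr; in particular, C_Tr(ρ) ≤ C̃_{l₁}(ρ) := ‖P₁ρP₂‖_Tr + ‖P₂ρP₁‖_Tr = 2‖P₁ρP₂‖_Tr. -/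
open Matrix
open scoped ComplexOrder Classical

namespace BlockCoherence

variable {n : Type*} [Fintype n] [DecidableEq n]

/-- Trace-norm block coherence `C_Tr(ρ,P) = inf { ‖ρ - λσ‖_Tr : λ > 0, σ ∈ I_B }`. -/
noncomputable def CTr {K : Type*} [Fintype K] (P : K → Matrix n n ℂ)
    (ρ : Matrix n n ℂ) : ℝ :=
  sInf {x : ℝ | ∃ (lam : ℝ) (σ : Matrix n n ℂ), 0 < lam ∧
    IsBlockIncoherent P σ ∧ x = trNorm (ρ - lam • σ)}

/-!
Take `λ = 1` and `σ = Δ(ρ)`, which is block-incoherent because `Δ` is an idempotent, trace-preserving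
positive map. Then `ρ - Δ(ρ) = X + Xᴴ` with `X = P₁ρP₂`, and `X * X = 0`. Hence `XᴴX` and
`XXᴴ` are positive matrices with product zero, so the square root of `(X + Xᴴ)ᴴ(X + Xᴴ) = XᴴX + XXᴴ`
splits as a sum and the trace norm is additive. Finally `‖Xᴴ‖_Tr = ‖X‖_Tr` since `XᴴX` and `XXᴴ`
have the same characteristic polynomial, hence the same eigenvalues.
-/
open scoped MatrixOrder

section
variable {𝕜 : Type*} [RCLike 𝕜]

theorem _root_.Matrix.PosSemidef.sqrt_mul_sqrt_eq_zero {A B : Matrix n n 𝕜} (hA : A.PosSemidef)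
    (hB : B.PosSemidef) (hAB : A * B = 0) : CFC.sqrt A * CFC.sqrt B = 0 := by
  set S := CFC.sqrt A
  set T := CFC.sqrt B
  have hS : Sᴴ = S := (CFC.sqrt_nonneg A).posSemidef.1
  have hT : Tᴴ = T := (CFC.sqrt_nonneg B).posSemidef.1
  have hTAT : T * A * T = 0 := by
    have hherm : (T * A * T)ᴴ = T * A * T := by
      simp only [conjTranspose_mul, hT, hA.1.eq, mul_assoc]
    have hsq : (T * A * T)ᴴ * (T * A * T) = 0 := by
      calc (T * A * T)ᴴ * (T * A * T) = T * (A * (T * T)) * A * T := by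
            rw [hherm]; simp only [mul_assoc]
        _ = 0 := by rw [CFC.sqrt_mul_sqrt_self B hB.nonneg, hAB]; simp
    exact conjTranspose_mul_self_eq_zero.mp hsq
  refine conjTranspose_mul_self_eq_zero.mp ?_
  calc (S * T)ᴴ * (S * T) = T * (S * S) * T := by
        rw [conjTranspose_mul, hS, hT]; simp only [mul_assoc]
    _ = 0 := by rw [CFC.sqrt_mul_sqrt_self A hA.nonneg, hTAT]

theorem _root_.Matrix.PosSemidef.sqrt_add_of_mul_eq_zero {A B : Matrix n n 𝕜}
    (hA : A.PosSemidef) (hB : B.PosSemidef) (hAB : A * B = 0) :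
    CFC.sqrt (A + B) = CFC.sqrt A + CFC.sqrt B := by
  have hBA : B * A = 0 := by
    simpa only [conjTranspose_mul, hA.1.eq, hB.1.eq, conjTranspose_zero]
      using congrArg conjTranspose hAB
  refine CFC.sqrt_unique ?_ (add_nonneg (CFC.sqrt_nonneg A) (CFC.sqrt_nonneg B))
  rw [add_mul, mul_add, mul_add, CFC.sqrt_mul_sqrt_self A hA.nonneg,
    CFC.sqrt_mul_sqrt_self B hB.nonneg, hA.sqrt_mul_sqrt_eq_zero hB hAB,
    hB.sqrt_mul_sqrt_eq_zero hA hBA, add_zero, zero_add]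

end

theorem msqrt_eq_sqrt {A : Matrix n n ℂ} (hA : A.PosSemidef) : msqrt A = CFC.sqrt A := by
  rw [msqrt, dif_pos hA, CFC.sqrt_eq_real_sqrt A hA.nonneg, cfcₙ_eq_cfc, hA.1.cfc_eq,
    IsHermitian.cfc, Unitary.conjStarAlgAut_apply]
  rfl

theorem retr_msqrt {A : Matrix n n ℂ} (hA : A.PosSemidef) :
    retr (msqrt A) = ∑ i, √(hA.1.eigenvalues i) := by
  have hU : star (hA.1.eigenvectorUnitary : Matrix n n ℂ) * hA.1.eigenvectorUnitary = 1 :=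
    Unitary.coe_star_mul_self hA.1.eigenvectorUnitary
  rw [msqrt, dif_pos hA, retr, trace_mul_cycle, hU, one_mul, trace_diagonal, Complex.re_sum]
  simp

theorem trNorm_eq_sum_sqrt_eigenvalues (M : Matrix n n ℂ) :
    trNorm M = ∑ i, √((posSemidef_conjTranspose_mul_self M).1.eigenvalues i) :=
  retr_msqrt (posSemidef_conjTranspose_mul_self M)

theorem trNorm_nonneg (M : Matrix n n ℂ) : 0 ≤ trNorm M := by
  rw [trNorm_eq_sum_sqrt_eigenvalues]
  exact Finset.sum_nonneg fun i _ => Real.sqrt_nonneg _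

theorem trNorm_conjTranspose (M : Matrix n n ℂ) : trNorm Mᴴ = trNorm M := by
  have hcharpoly : (Mᴴᴴ * Mᴴ).charpoly = (Mᴴ * M).charpoly := by
    rw [conjTranspose_conjTranspose, charpoly_mul_comm]
  rw [trNorm_eq_sum_sqrt_eigenvalues, trNorm_eq_sum_sqrt_eigenvalues,
    (IsHermitian.eigenvalues_eq_eigenvalues_iff _ _).mpr hcharpoly]

theorem trNorm_add_of_orthogonal {X Y : Matrix n n ℂ} (hcol : Xᴴ * Y = 0) (hrow : X * Yᴴ = 0) :
    trNorm (X + Y) = trNorm X + trNorm Y := by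
  have hcol' : Yᴴ * X = 0 := by
    simpa only [conjTranspose_mul, conjTranspose_conjTranspose, conjTranspose_zero]
      using congrArg conjTranspose hcol
  have hA := posSemidef_conjTranspose_mul_self X
  have hB := posSemidef_conjTranspose_mul_self Y
  have hgram : (X + Y)ᴴ * (X + Y) = Xᴴ * X + Yᴴ * Y := by
    rw [conjTranspose_add, add_mul, mul_add, mul_add, hcol, hcol', add_zero, zero_add]
  have hAB : Xᴴ * X * (Yᴴ * Y) = 0 := by
    rw [mul_assoc, ← mul_assoc X, hrow, zero_mul, mul_zero]
  rw [trNorm, hgram, msqrt_eq_sqrt (hA.add hB), hA.sqrt_add_of_mul_eq_zero hB hAB, trNorm,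
    trNorm, msqrt_eq_sqrt hA, msqrt_eq_sqrt hB, retr, retr, retr, trace_add, Complex.add_re]

section ProjFamily
variable {K : Type*} [Fintype K] {P : K → Matrix n n ℂ}

theorem IsProjFamily.trace_deph (hP : IsProjFamily P) (ρ : Matrix n n ℂ) :
    (deph P ρ).trace = ρ.trace := by
  obtain ⟨-, hidem, -, hsum⟩ := hP
  calc (deph P ρ).trace = ∑ k, (P k * ρ).trace := by
        simp only [deph, trace_sum, trace_mul_cycle, hidem]
    _ = ρ.trace := by rw [← trace_sum, ← Finset.sum_mul, hsum, one_mul]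

theorem IsProjFamily.deph_deph (hP : IsProjFamily P) (ρ : Matrix n n ℂ) :
    deph P (deph P ρ) = deph P ρ := by
  obtain ⟨-, hidem, horth, -⟩ := hP
  refine Finset.sum_congr rfl fun k _ => ?_
  rw [deph, Finset.mul_sum, Finset.sum_mul, Finset.sum_eq_single k]
  · rw [← mul_assoc (P k) (P k * ρ), ← mul_assoc (P k) (P k), hidem, mul_assoc _ (P k), hidem]
  · intro j _ hjk
    rw [← mul_assoc, ← mul_assoc, horth k j hjk.symm]
    simp
  · simp

theorem IsProjFamily.isBlockIncoherent_deph (hP : IsProjFamily P) {ρ : Matrix n n ℂ}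
    (hρ : IsDensityMatrix ρ) : IsBlockIncoherent P (deph P ρ) := by
  have hpsd : (deph P ρ).PosSemidef := by
    refine posSemidef_sum _ fun k _ => ?_
    simpa only [(hP.1 k).eq] using hρ.1.mul_mul_conjTranspose_same (P k)
  exact ⟨⟨hpsd, (hP.trace_deph ρ).trans hρ.2⟩, (hP.deph_deph ρ).symm⟩

theorem IsProjFamily.CTr_le_trNorm_sub_deph (hP : IsProjFamily P) {ρ : Matrix n n ℂ}
    (hρ : IsDensityMatrix ρ) : CTr P ρ ≤ trNorm (ρ - deph P ρ) := by
  refine csInf_le ⟨0, ?_⟩ ⟨1, deph P ρ, one_pos, hP.isBlockIncoherent_deph hρ, by rw [one_smul]⟩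
  rintro _ ⟨lam, σ, -, -, rfl⟩
  exact trNorm_nonneg _

end ProjFamily

theorem trNorm_add_conjTranspose_of_mul_self_eq_zero {X : Matrix n n ℂ} (h : X * X = 0) :
    trNorm (X + Xᴴ) = 2 * trNorm X := by
  rw [trNorm_add_of_orthogonal (by rw [← conjTranspose_mul, h, conjTranspose_zero])
    (by rw [conjTranspose_conjTranspose, h]), trNorm_conjTranspose, two_mul]

section TwoProjectors
variable {P₁ P₂ : Matrix n n ℂ}

theorem IsProjFamily.sub_deph_two (hP : IsProjFamily ![P₁, P₂]) (ρ : Matrix n n ℂ) :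
    ρ - deph ![P₁, P₂] ρ = P₁ * ρ * P₂ + P₂ * ρ * P₁ := by
  have hsum : P₁ + P₂ = 1 := by simpa [Fin.sum_univ_two] using hP.2.2.2
  calc ρ - deph ![P₁, P₂] ρ = (P₁ + P₂) * ρ * (P₁ + P₂) - (P₁ * ρ * P₁ + P₂ * ρ * P₂) := by
        simp [hsum, deph, Fin.sum_univ_two]
    _ = P₁ * ρ * P₂ + P₂ * ρ * P₁ := by noncomm_ring

theorem IsProjFamily.conjTranspose_offDiag_two (hP : IsProjFamily ![P₁, P₂]) {ρ : Matrix n n ℂ}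
    (hρ : ρ.IsHermitian) : (P₁ * ρ * P₂)ᴴ = P₂ * ρ * P₁ := by
  have h₁ : P₁ᴴ = P₁ := hP.1 0
  have h₂ : P₂ᴴ = P₂ := hP.1 1
  simp only [conjTranspose_mul, h₁, h₂, hρ.eq, mul_assoc]

theorem IsProjFamily.offDiag_two_mul_self (hP : IsProjFamily ![P₁, P₂]) (ρ : Matrix n n ℂ) :
    P₁ * ρ * P₂ * (P₁ * ρ * P₂) = 0 := by
  have h : P₂ * P₁ = 0 := hP.2.2.1 1 0 (by decide)
  simp only [mul_assoc, ← mul_assoc P₂ P₁, h, zero_mul, mul_zero]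

end TwoProjectors

/-- for two orthogonal projectors,
`C_Tr(ρ) ≤ ‖P₁ρP₂‖_Tr + ‖P₂ρP₁‖_Tr = 2‖P₁ρP₂‖_Tr`. -/
theorem CTr_le_l1tilde
    (P₁ P₂ : Matrix n n ℂ) (hP : IsProjFamily ![P₁, P₂])
    (ρ : Matrix n n ℂ) (hρ : IsDensityMatrix ρ) :
    CTr ![P₁, P₂] ρ ≤ trNorm (P₁ * ρ * P₂) + trNorm (P₂ * ρ * P₁) ∧
      trNorm (P₁ * ρ * P₂) + trNorm (P₂ * ρ * P₁) = 2 * trNorm (P₁ * ρ * P₂) := by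
  set X := P₁ * ρ * P₂
  have hX : Xᴴ = P₂ * ρ * P₁ := hP.conjTranspose_offDiag_two hρ.1.1
  rw [← hX, trNorm_conjTranspose, ← two_mul]
  refine ⟨?_, rfl⟩
  calc CTr ![P₁, P₂] ρ ≤ trNorm (ρ - deph ![P₁, P₂] ρ) := hP.CTr_le_trNorm_sub_deph hρ
    _ = trNorm (X + Xᴴ) := by rw [hP.sub_deph_two, hX]
    _ = 2 * trNorm X := trNorm_add_conjTranspose_of_mul_self_eq_zero (hP.offDiag_two_mul_self ρ)

end BlockCoherence
end

section
/- Let P = {P_k} be a complete family of orthogonal projectors and ρ a density matrix. Define C_r(ρ,P) = min_{σ ∈ I_B} S(ρ‖σ), C_max(ρ,P) = min_{σ ∈ I_B} log₂ min{ λ ≥ 1 : ρ ≤ λσ }, and C_rob(ρ,P) = inf{ s ≥ 0 : there exists σ ∈ I_B with ρ ≤ (1+s)σ }. Then C_r(ρ,P) ≤ C_max(ρ,P) ≤ log₂(1 + C_rob(ρ,P)). -/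
/-!
If `ρ ≤ λσ` with `λ > 0`, then `S(ρ‖σ) ≤ log₂ λ`. Indeed, the logarithm is operator monotone, so
`log (ρ + ε) ≤ log (λσ + ε)` for every `ε > 0`, whence
`Tr ρ log ρ ≤ Tr ρ log (ρ + ε) ≤ Tr ρ log (λσ + ε)`. As `ε → 0` the right-hand side tends to
`log λ + Tr ρ log σ`: it stays finite because `ρ ≤ λσ` forces `ρ` to vanish on the kernel of `σ`.
Taking infima gives `C_r ≤ C_max`, and `C_max ≤ log₂ (1 + C_rob)` because every `s` feasible for
`C_rob` makes `λ = 1 + s` feasible for `C_max`. Both infima run over nonempty sets since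
`ρ ≤ d • (I / d)` and the maximally mixed state `I / d` is block-incoherent.
-/

open Matrix
open scoped ComplexOrder Classical

namespace BlockCoherence

variable {n : Type*} [Fintype n] [DecidableEq n]

/-- Robustness of block coherence, primal formulation:
`C_rob(ρ,P) = inf { s ≥ 0 : ∃ σ ∈ I_B, ρ ≤ (1+s)σ }`. -/
noncomputable def Crob {K : Type*} [Fintype K] (P : K → Matrix n n ℂ)
    (ρ : Matrix n n ℂ) : ℝ :=
  sInf {s : ℝ | 0 ≤ s ∧ ∃ σ, IsBlockIncoherent P σ ∧ ((1 + s) • σ - ρ).PosSemidef}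

/-- Quantum relative entropy with base-2 logarithm, `+∞` when the support of
`ρ` is not contained in that of `σ`. -/
noncomputable def relent (ρ σ : Matrix n n ℂ) : EReal :=
  if ∀ x : n → ℂ, σ *ᵥ x = 0 → ρ *ᵥ x = 0 then
    ((retr (ρ * mlog2 ρ) - retr (ρ * mlog2 σ) : ℝ) : EReal)
  else ⊤

/-- The relative-entropy block coherence `C_r(ρ,P) = min_{σ∈I_B} S(ρ‖σ)`. -/
noncomputable def Cr {K : Type*} [Fintype K] (P : K → Matrix n n ℂ)
    (ρ : Matrix n n ℂ) : EReal :=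
  sInf {x : EReal | ∃ σ, IsBlockIncoherent P σ ∧ x = relent ρ σ}

/-- The max-relative-entropy block coherence
`C_max(ρ,P) = min_{σ∈I_B} log₂ min { λ ≥ 1 : ρ ≤ λσ }`. -/
noncomputable def Cmax {K : Type*} [Fintype K] (P : K → Matrix n n ℂ)
    (ρ : Matrix n n ℂ) : ℝ :=
  sInf {x : ℝ | ∃ (σ : Matrix n n ℂ) (lam : ℝ), IsBlockIncoherent P σ ∧
    1 ≤ lam ∧ (lam • σ - ρ).PosSemidef ∧ x = Real.logb 2 lam}

section SpectralWeights

open scoped MatrixOrder Matrix.Norms.L2Operator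

variable {A M : Matrix n n ℂ}

noncomputable def spectralWeight (hA : A.IsHermitian) (M : Matrix n n ℂ) (j : n) : ℝ :=
  ((star (hA.eigenvectorUnitary : Matrix n n ℂ) * M * hA.eigenvectorUnitary) j j).re

theorem re_trace_mul_cfc (hA : A.IsHermitian) (M : Matrix n n ℂ) (f : ℝ → ℝ) :
    (trace (M * cfc f A)).re = ∑ j, spectralWeight hA M j * f (hA.eigenvalues j) := by
  rw [hA.cfc_eq, IsHermitian.cfc, Unitary.conjStarAlgAut_apply, ← mul_assoc, ← mul_assoc,
    trace_mul_cycle, ← mul_assoc]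
  simp [trace, mul_diagonal, Complex.re_sum, spectralWeight]

theorem spectralWeight_nonneg (hA : A.IsHermitian) (hM : M.PosSemidef) (j : n) :
    0 ≤ spectralWeight hA M j := by
  have h := hM.conjTranspose_mul_mul_same (hA.eigenvectorUnitary : Matrix n n ℂ)
  exact (Complex.nonneg_iff.mp (h.diag_nonneg (i := j))).1

theorem sum_spectralWeight (hA : A.IsHermitian) (M : Matrix n n ℂ) :
    ∑ j, spectralWeight hA M j = (trace M).re := by
  set U : Matrix n n ℂ := (hA.eigenvectorUnitary : Matrix n n ℂ)
  have hU : U * star U = 1 := Unitary.mul_star_self_of_mem hA.eigenvectorUnitary.2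
  calc ∑ j, spectralWeight hA M j = (trace (star U * M * U)).re := by
        simp [spectralWeight, trace, U]
    _ = (trace M).re := by rw [trace_mul_cycle, hU, one_mul]

theorem spectralWeight_self (hA : A.IsHermitian) (j : n) :
    spectralWeight hA A j = hA.eigenvalues j := by
  have h := hA.conjStarAlgAut_star_eigenvectorUnitary
  rw [Unitary.conjStarAlgAut_star_apply] at h
  simp [spectralWeight, h]

theorem spectralWeight_le_of_posSemidef_smul_sub (hA : A.IsHermitian) {c : ℝ}
    (h : (c • A - M).PosSemidef) (j : n) :
    spectralWeight hA M j ≤ c * hA.eigenvalues j := by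
  have h0 := spectralWeight_nonneg hA h j
  have hlin : spectralWeight hA (c • A - M) j =
      c * spectralWeight hA A j - spectralWeight hA M j := by
    simp [spectralWeight, mul_sub, sub_mul, Complex.real_smul]
  rw [hlin, spectralWeight_self] at h0
  linarith

theorem re_trace_mul_le_of_le {ρ X Y : Matrix n n ℂ} (hρ : ρ.PosSemidef) (hXY : X ≤ Y) :
    (trace (ρ * X)).re ≤ (trace (ρ * Y)).re := by
  have hD : (Y - X).PosSemidef := hXY
  have h : 0 ≤ (trace (ρ * cfc (id : ℝ → ℝ) (Y - X))).re := by
    rw [re_trace_mul_cfc hD.1]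
    exact Finset.sum_nonneg fun j _ =>
      mul_nonneg (spectralWeight_nonneg hD.1 hρ j) (hD.eigenvalues_nonneg j)
  rw [cfc_id ℝ (Y - X) hD.1.isSelfAdjoint, mul_sub, trace_sub, Complex.sub_re] at h
  linarith

theorem log_smul_add_algebraMap_eq_cfc (hA : A.IsHermitian) (c ε : ℝ) :
    CFC.log (c • A + algebraMap ℝ _ ε) = cfc (fun x => Real.log (c * x + ε)) A := by
  have hA' : IsSelfAdjoint A := hA
  rw [cfc_comp' Real.log (fun x => c * x + ε) A
      ((Matrix.finite_real_spectrum.image _).continuousOn _)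
      (Matrix.finite_real_spectrum.continuousOn _),
    cfc_add_const ε (c * ·) A (Matrix.finite_real_spectrum.continuousOn _), cfc_const_mul_id c A,
    CFC.log]

theorem sum_mul_log_add_le_of_posSemidef_smul_sub {ρ σ : Matrix n n ℂ} (hρ : ρ.PosSemidef)
    (hσ : σ.IsHermitian) {c : ℝ} (h : (c • σ - ρ).PosSemidef) {ε : ℝ} (hε : 0 < ε) :
    ∑ i, hρ.1.eigenvalues i * Real.log (hρ.1.eigenvalues i + ε) ≤
      ∑ j, spectralWeight hσ ρ j * Real.log (c * hσ.eigenvalues j + ε) := by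
  have hpos : IsStrictlyPositive (ρ + algebraMap ℝ (Matrix n n ℂ) ε) :=
    .nonneg_add (nonneg_iff_posSemidef.mpr hρ) (isStrictlyPositive_algebraMap hε)
  have hle : ρ + algebraMap ℝ _ ε ≤ c • σ + algebraMap ℝ _ ε := add_le_add_left h _
  have hlog := re_trace_mul_le_of_le hρ (CFC.log_le_log hle hpos)
  rw [← one_smul ℝ ρ, log_smul_add_algebraMap_eq_cfc hρ.1, log_smul_add_algebraMap_eq_cfc hσ,
    re_trace_mul_cfc hρ.1, re_trace_mul_cfc hσ, one_smul] at hlog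
  simpa only [spectralWeight_self, one_mul] using hlog

end SpectralWeights

theorem mlog2_eq_cfc {A : Matrix n n ℂ} (hA : A.IsHermitian) : mlog2 A = cfc (Real.logb 2) A := by
  rw [mlog2, dif_pos hA, hA.cfc_eq, IsHermitian.cfc, Unitary.conjStarAlgAut_apply]
  rfl

section ScalarLog

open Filter Topology Real

theorem mul_log_le_mul_log_add {p ε : ℝ} (hp : 0 ≤ p) (hε : 0 < ε) :
    p * log p ≤ p * log (p + ε) := by
  rcases hp.eq_or_lt with rfl | hp
  · simp
  · exact mul_le_mul_of_nonneg_left (log_le_log hp (by linarith)) hp.le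

theorem tendsto_sum_mul_log_add {ι : Type*} [Fintype ι] {r x : ι → ℝ}
    (h : ∀ j, r j ≠ 0 → 0 < x j) :
    Tendsto (fun ε => ∑ j, r j * log (x j + ε)) (𝓝 0) (𝓝 (∑ j, r j * log (x j))) := by
  refine tendsto_finsetSum _ fun j _ => ?_
  by_cases hr : r j = 0
  · simp [hr]
  · have : ContinuousAt (fun ε => r j * log (x j + ε)) 0 :=
      (continuousAt_const.add continuousAt_id).log (by simpa using (h j hr).ne') |>.const_mul _
    simpa using this.tendsto

theorem sum_mul_log_mul {ι : Type*} [Fintype ι] {r x : ι → ℝ} (h : ∀ j, r j ≠ 0 → 0 < x j)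
    {c : ℝ} (hc : 0 < c) (hr : ∑ j, r j = 1) :
    ∑ j, r j * log (c * x j) = log c + ∑ j, r j * log (x j) := by
  have hterm : ∀ j, r j * log (c * x j) = r j * log c + r j * log (x j) := fun j => by
    by_cases hrj : r j = 0
    · simp [hrj]
    · rw [log_mul hc.ne' (h j hrj).ne', mul_add]
  simp only [hterm, Finset.sum_add_distrib, ← Finset.sum_mul, hr, one_mul]

end ScalarLog

open Filter Topology in
theorem retr_mul_mlog2_sub_le_logb {ρ σ : Matrix n n ℂ} (hρ : IsDensityMatrix ρ)
    (hσ : σ.PosSemidef) {c : ℝ} (hc : 0 < c) (h : (c • σ - ρ).PosSemidef) :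
    retr (ρ * mlog2 ρ) - retr (ρ * mlog2 σ) ≤ Real.logb 2 c := by
  set p := hρ.1.1.eigenvalues
  set q := hσ.1.eigenvalues
  set r := spectralWeight hσ.1 ρ
  have hr : ∀ j, r j ≠ 0 → 0 < c * q j := fun j hj =>
    ((spectralWeight_nonneg hσ.1 hρ.1 j).lt_of_ne' hj).trans_le
      (spectralWeight_le_of_posSemidef_smul_sub hσ.1 h j)
  have hsum : ∑ j, r j = 1 := by rw [sum_spectralWeight, hρ.2, Complex.one_re]
  have hlog : ∑ i, p i * Real.log (p i) ≤ Real.log c + ∑ j, r j * Real.log (q j) := by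
    rw [← sum_mul_log_mul (fun j hj => pos_of_mul_pos_right (hr j hj) hc.le) hc hsum]
    refine ge_of_tendsto ((tendsto_sum_mul_log_add hr).mono_left
      (nhdsWithin_le_nhds (s := Set.Ioi 0))) ?_
    filter_upwards [self_mem_nhdsWithin] with ε (hε : 0 < ε)
    calc ∑ i, p i * Real.log (p i) ≤ ∑ i, p i * Real.log (p i + ε) :=
          Finset.sum_le_sum fun i _ => mul_log_le_mul_log_add (hρ.1.eigenvalues_nonneg i) hε
      _ ≤ ∑ j, r j * Real.log (c * q j + ε) :=
          sum_mul_log_add_le_of_posSemidef_smul_sub hρ.1 hσ.1 h hε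
  rw [retr, retr, mlog2_eq_cfc hρ.1.1, mlog2_eq_cfc hσ.1, re_trace_mul_cfc hρ.1.1,
    re_trace_mul_cfc hσ.1]
  simp only [spectralWeight_self, Real.logb, mul_div_assoc', ← Finset.sum_div, div_sub_div_same]
  exact div_le_div_of_nonneg_right (by linarith) (Real.log_pos one_lt_two).le

omit [DecidableEq n] in
theorem mulVec_eq_zero_of_posSemidef_smul_sub {ρ σ : Matrix n n ℂ} (hρ : ρ.PosSemidef) {c : ℝ}
    (h : (c • σ - ρ).PosSemidef) {x : n → ℂ} (hx : σ *ᵥ x = 0) : ρ *ᵥ x = 0 := by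
  have hneg := h.dotProduct_mulVec_nonneg x
  rw [sub_mulVec, smul_mulVec, hx, smul_zero, zero_sub, dotProduct_neg, neg_nonneg] at hneg
  exact (hρ.dotProduct_mulVec_zero_iff x).mp (le_antisymm hneg (hρ.dotProduct_mulVec_nonneg x))

theorem relent_le_logb {ρ σ : Matrix n n ℂ} (hρ : IsDensityMatrix ρ) (hσ : σ.PosSemidef) {c : ℝ}
    (hc : 0 < c) (h : (c • σ - ρ).PosSemidef) : relent ρ σ ≤ (Real.logb 2 c : EReal) := by
  rw [relent, if_pos fun x => mulVec_eq_zero_of_posSemidef_smul_sub hρ.1 h]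
  exact EReal.coe_le_coe_iff.mpr (retr_mul_mlog2_sub_le_logb hρ hσ hc h)

omit [DecidableEq n] in
theorem IsDensityMatrix.nonempty {ρ : Matrix n n ℂ} (hρ : IsDensityMatrix ρ) : Nonempty n := by
  by_contra h
  rw [not_nonempty_iff] at h
  simpa [trace] using hρ.2

open scoped MatrixOrder in
theorem IsDensityMatrix.posSemidef_one_sub {ρ : Matrix n n ℂ} (hρ : IsDensityMatrix ρ) :
    (1 - ρ).PosSemidef := by
  have hsum : ∑ i, hρ.1.1.eigenvalues i = 1 := by
    have h := hρ.1.1.trace_eq_sum_eigenvalues.symm.trans hρ.2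
    simpa using congrArg Complex.re h
  refine le_iff.mp (CFC.le_one (R := ℝ) (fun x hx => ?_) hρ.1.1.isSelfAdjoint)
  obtain ⟨i, rfl⟩ := hρ.1.1.spectrum_real_eq_range_eigenvalues ▸ hx
  exact hsum ▸ Finset.single_le_sum (fun j _ => hρ.1.eigenvalues_nonneg j) (Finset.mem_univ i)

theorem isBlockIncoherent_maximallyMixed [Nonempty n] {K : Type*} [Fintype K]
    {P : K → Matrix n n ℂ} (hP : IsProjFamily P) :
    IsBlockIncoherent P ((Fintype.card n : ℝ)⁻¹ • (1 : Matrix n n ℂ)) := by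
  refine ⟨⟨PosSemidef.one.smul (by positivity), ?_⟩, ?_⟩
  · simp [trace_smul, Complex.real_smul]
  · rw [deph]
    simp only [Matrix.mul_smul, Matrix.smul_mul, mul_one, hP.2.1, ← Finset.smul_sum, hP.2.2.2]

theorem exists_isBlockIncoherent_smul_sub_posSemidef {K : Type*} [Fintype K]
    {P : K → Matrix n n ℂ} (hP : IsProjFamily P) {ρ : Matrix n n ℂ} (hρ : IsDensityMatrix ρ) :
    ∃ σ, IsBlockIncoherent P σ ∧ ((Fintype.card n : ℝ) • σ - ρ).PosSemidef := by
  have := hρ.nonempty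
  refine ⟨_, isBlockIncoherent_maximallyMixed hP, ?_⟩
  rw [smul_smul, mul_inv_cancel₀ (by positivity), one_smul]
  exact hρ.posSemidef_one_sub

section Coherence

variable {K : Type*} [Fintype K] {P : K → Matrix n n ℂ} {ρ : Matrix n n ℂ}

theorem Cr_le_relent {σ : Matrix n n ℂ} (hσ : IsBlockIncoherent P σ) : Cr P ρ ≤ relent ρ σ :=
  sInf_le ⟨σ, hσ, rfl⟩

omit [DecidableEq n] in
theorem bddBelow_Cmax_set :
    BddBelow {x : ℝ | ∃ (σ : Matrix n n ℂ) (lam : ℝ), IsBlockIncoherent P σ ∧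
      1 ≤ lam ∧ (lam • σ - ρ).PosSemidef ∧ x = Real.logb 2 lam} :=
  ⟨0, by rintro _ ⟨σ, lam, -, hlam, -, rfl⟩; exact Real.logb_nonneg one_lt_two hlam⟩

omit [DecidableEq n] in
theorem Cmax_le_logb {σ : Matrix n n ℂ} (hσ : IsBlockIncoherent P σ) {lam : ℝ} (hlam : 1 ≤ lam)
    (h : (lam • σ - ρ).PosSemidef) : Cmax P ρ ≤ Real.logb 2 lam :=
  csInf_le bddBelow_Cmax_set ⟨σ, lam, hσ, hlam, h, rfl⟩

theorem Cr_le_Cmax (hP : IsProjFamily P) (hρ : IsDensityMatrix ρ) :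
    Cr P ρ ≤ (Cmax P ρ : EReal) := by
  have := hρ.nonempty
  obtain ⟨σ₀, hσ₀, hρσ₀⟩ := exists_isBlockIncoherent_smul_sub_posSemidef hP hρ
  have hd : (1 : ℝ) ≤ Fintype.card n := by exact_mod_cast Fintype.card_pos
  rw [Cmax, Monotone.map_csInf_of_continuousAt continuous_coe_real_ereal.continuousAt
    (fun _ _ => EReal.coe_le_coe) ?_ bddBelow_Cmax_set]
  · refine le_sInf (Set.forall_mem_image.mpr ?_)
    rintro _ ⟨σ, lam, hσ, hlam, hρσ, rfl⟩
    exact (Cr_le_relent hσ).trans (relent_le_logb hρ hσ.1.1 (by linarith) hρσ)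
  · exact ⟨_, σ₀, _, hσ₀, hd, hρσ₀, rfl⟩

theorem Cmax_le_logb_one_add_Crob (hP : IsProjFamily P) (hρ : IsDensityMatrix ρ) :
    Cmax P ρ ≤ Real.logb 2 (1 + Crob P ρ) := by
  have := hρ.nonempty
  obtain ⟨σ₀, hσ₀, hρσ₀⟩ := exists_isBlockIncoherent_smul_sub_posSemidef hP hρ
  have hd : (1 : ℝ) ≤ Fintype.card n := by exact_mod_cast Fintype.card_pos
  have hCrob : 0 ≤ Crob P ρ := Real.sInf_nonneg fun s hs => hs.1
  rw [Real.le_logb_iff_rpow_le one_lt_two (by linarith), ← sub_le_iff_le_add', Crob]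
  refine le_csInf ⟨Fintype.card n - 1, by linarith, σ₀, hσ₀, by simpa using hρσ₀⟩ ?_
  rintro s ⟨hs, σ, hσ, hρσ⟩
  have hle := Cmax_le_logb hσ (by linarith) hρσ
  rw [Real.le_logb_iff_rpow_le one_lt_two (by linarith)] at hle
  linarith

end Coherence

/-- `C_r(ρ,P) ≤ C_max(ρ,P) ≤ log₂(1 + C_rob(ρ,P))`. -/
theorem Cr_le_Cmax_le_log_Crob
    {K : Type*} [Fintype K]
    (P : K → Matrix n n ℂ) (hP : IsProjFamily P)
    (ρ : Matrix n n ℂ) (hρ : IsDensityMatrix ρ) :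
    Cr P ρ ≤ (Cmax P ρ : EReal) ∧ Cmax P ρ ≤ Real.logb 2 (1 + Crob P ρ) :=
  ⟨Cr_le_Cmax hP hρ, Cmax_le_logb_one_add_Crob hP hρ⟩

end BlockCoherence
end

section
/- For every real x ∈ [0,1], 2√(x(1−x)) ≥ −x log₂ x − (1−x) log₂(1−x) (with the convention 0 log₂ 0 = 0); i.e., twice the square root of x(1−x) dominates the binary entropy function. Consequently, for pure states in the singlet–triplet setting, the improved l₁-type measure C̃_{l₁} dominates the relative-entropy measure C_r. -/
open Matrix
open scoped ComplexOrder Classical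

/-!
In nats the claim reads `binEntropy p ≤ 2 log 2 · w` with `w = √(p(1-p)) ∈ [0, 1/2]`, an equality
at `p = 1/2`. Near the middle the Pinsker-type bound `binEntropy p ≤ log 2 - 2(p - 1/2)²
= log 2 - (1 - 4w²)/2` suffices as soon as `2w ≥ 2 log 2 - 1`. Away from it, `u ≤ sinh u` for
`u = -log √p` gives `-p log p ≤ √p (1 - p)`, hence `binEntropy p ≤ (√p + √(1-p)) w`, and
`(√p + √(1-p))² = 1 + 2w < 2 log 2 < (2 log 2)²` once `2w < 2 log 2 - 1`.
Both cases only need `log 2 > 1/2`.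
-/

namespace Real

lemma neg_log_le_inv_sub_self_div_two {t : ℝ} (ht₀ : 0 < t) (ht₁ : t ≤ 1) :
    -log t ≤ (t⁻¹ - t) / 2 := by
  have h := self_le_sinh_iff.2 (neg_nonneg.2 (log_nonpos ht₀.le ht₁))
  rwa [sinh_eq, neg_neg, exp_neg, exp_log ht₀] at h

lemma negMulLog_le_sqrt_mul_one_sub {p : ℝ} (hp₀ : 0 ≤ p) (hp₁ : p ≤ 1) :
    negMulLog p ≤ √p * (1 - p) := by
  rcases hp₀.eq_or_lt with rfl | hp₀
  · simp
  obtain ⟨t, ht₀, rfl⟩ : ∃ t, 0 < t ∧ t ^ 2 = p := ⟨√p, sqrt_pos.2 hp₀, sq_sqrt hp₀.le⟩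
  have h := neg_log_le_inv_sub_self_div_two ht₀ ((sq_le_one_iff₀ ht₀.le).1 hp₁)
  calc negMulLog (t ^ 2) = t ^ 2 * (2 * -log t) := by rw [negMulLog, log_pow]; push_cast; ring
    _ ≤ t ^ 2 * (t⁻¹ - t) := by gcongr; linarith
    _ = √(t ^ 2) * (1 - t ^ 2) := by rw [sqrt_sq ht₀.le]; field_simp

lemma binEntropy_le_sqrt_add_sqrt_mul_sqrt {p : ℝ} (hp₀ : 0 ≤ p) (hp₁ : p ≤ 1) :
    binEntropy p ≤ (√p + √(1 - p)) * √(p * (1 - p)) := by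
  have h₁ := negMulLog_le_sqrt_mul_one_sub hp₀ hp₁
  have h₂ := negMulLog_le_sqrt_mul_one_sub (sub_nonneg.2 hp₁) (by linarith)
  rw [sub_sub_cancel] at h₂
  rw [binEntropy_eq_negMulLog_add_negMulLog_one_sub, sqrt_mul hp₀]
  have hp := mul_self_sqrt hp₀
  have hq := mul_self_sqrt (sub_nonneg.2 hp₁)
  linear_combination h₁ + h₂ - √(1 - p) * hp - √p * hq

lemma two_mul_le_log_one_add_sub_log_one_sub {s : ℝ} (hs₀ : 0 ≤ s) (hs₁ : s < 1) :
    2 * s ≤ log (1 + s) - log (1 - s) := by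
  have h := hasSum_log_sub_log_of_abs_lt_one (abs_lt.2 ⟨by linarith, hs₁⟩)
  simpa using le_hasSum h 0 fun k _ ↦ by positivity

lemma binEntropy_le_log_two_sub_two_mul_sq {p : ℝ} (hp₀ : 0 ≤ p) (hp₁ : p ≤ 1) :
    binEntropy p ≤ log 2 - 2 * (p - 2⁻¹) ^ 2 := by
  wlog hp : 2⁻¹ ≤ p generalizing p
  · have h := this (sub_nonneg.2 hp₁) (by linarith) (by linarith)
    rw [binEntropy_one_sub] at h
    linarith
  have hanti : AntitoneOn (fun p ↦ binEntropy p + 2 * (p - 2⁻¹) ^ 2) (Set.Icc 2⁻¹ 1) := by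
    refine antitoneOn_of_hasDerivWithinAt_nonpos (convex_Icc _ _) (by fun_prop)
      (f' := fun p ↦ log (1 - p) - log p + 4 * (p - 2⁻¹)) (fun q hq ↦ ?_) (fun q hq ↦ ?_)
    all_goals rw [interior_Icc] at hq; obtain ⟨hq₀, hq₁⟩ := hq
    · have hsq := (((hasDerivAt_id' q).sub_const 2⁻¹).pow 2).const_mul 2
      refine (((hasDerivAt_binEntropy (by linarith) hq₁.ne).add hsq).congr_deriv ?_).hasDerivWithinAt
      norm_num; ring
    · have h := two_mul_le_log_one_add_sub_log_one_sub (s := 2 * q - 1) (by linarith) (by linarith)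
      rw [show 1 + (2 * q - 1) = 2 * q by ring, show 1 - (2 * q - 1) = 2 * (1 - q) by ring,
        log_mul two_ne_zero (by linarith), log_mul two_ne_zero (by linarith)] at h
      linarith
  have h := hanti ⟨le_rfl, by norm_num⟩ ⟨hp, hp₁⟩ hp
  simp only [binEntropy_two_inv, sub_self] at h
  linarith

lemma binEntropy_le_two_mul_log_two_mul_sqrt {p : ℝ} (hp₀ : 0 ≤ p) (hp₁ : p ≤ 1) :
    binEntropy p ≤ 2 * log 2 * √(p * (1 - p)) := by
  set w := √(p * (1 - p))
  have hw₀ : 0 ≤ w := sqrt_nonneg _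
  have hw_sq : w ^ 2 = p * (1 - p) := sq_sqrt (mul_nonneg hp₀ (sub_nonneg.2 hp₁))
  have hw₁ : 2 * w ≤ 1 := by nlinarith [sq_nonneg (2 * p - 1)]
  have hlog : 1 / 2 < log 2 := by linarith [log_two_gt_d9]
  by_cases hw : 2 * log 2 - 1 ≤ 2 * w
  · have h := binEntropy_le_log_two_sub_two_mul_sq hp₀ hp₁
    nlinarith [mul_nonneg (sub_nonneg.2 hw₁) (sub_nonneg.2 hw)]
  · have hsum_sq : (√p + √(1 - p)) ^ 2 = 1 + 2 * w := by
      rw [add_sq, sq_sqrt hp₀, sq_sqrt (sub_nonneg.2 hp₁), mul_assoc, ← sqrt_mul hp₀]; ring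
    have hsum : √p + √(1 - p) ≤ 2 * log 2 := by
      nlinarith [sqrt_nonneg p, sqrt_nonneg (1 - p)]
    calc binEntropy p ≤ (√p + √(1 - p)) * w := binEntropy_le_sqrt_add_sqrt_mul_sqrt hp₀ hp₁
      _ ≤ 2 * log 2 * w := by gcongr

end Real

namespace BlockCoherence

/-- for `x ∈ [0,1]`, twice the square root of `x(1-x)` dominates
the binary entropy: `2√(x(1-x)) ≥ -x log₂ x - (1-x) log₂ (1-x)`; hence for pure
states the improved `l₁`-type measure dominates the relative-entropy measure. -/
theorem binaryEntropy_le_two_sqrt (x : ℝ) (hx : x ∈ Set.Icc (0 : ℝ) 1) :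
    -(x * Real.logb 2 x) - (1 - x) * Real.logb 2 (1 - x) ≤
      2 * Real.sqrt (x * (1 - x)) := by
  have hbits : -(x * Real.logb 2 x) - (1 - x) * Real.logb 2 (1 - x) =
      Real.binEntropy x / Real.log 2 := by
    simp only [Real.logb, Real.binEntropy, Real.log_inv]; ring
  rw [hbits, div_le_iff₀ (Real.log_pos one_lt_two)]
  linarith [Real.binEntropy_le_two_mul_log_two_mul_sqrt hx.1 hx.2]

end BlockCoherence
end

section
/- Let ρ be an n×n density matrix with positive semidefinite square root √ρ, and let Q be an n×n Hermitian matrix. Then Tr(√ρ Q √ρ Q) ≥ [Tr(ρ Q)]². Consequently, for a Hermitian projector Q (Q² = Q), the variance Var(ρ,Q) = Tr(ρQ²) − [Tr(ρQ)]² dominates the Wigner–Yanase skew information I_{WY}(ρ,Q) = Tr(ρQ²) − Tr(√ρ Q √ρ Q). -/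
open Matrix
open scoped ComplexOrder Classical

namespace BlockCoherence

variable {n : Type*} [Fintype n] [DecidableEq n]

open scoped MatrixOrder in
theorem msqrt_posSemidef {A : Matrix n n ℂ} (hA : A.PosSemidef) : (msqrt A).PosSemidef := by
  rw [msqrt_eq_cfc hA, ← nonneg_iff_posSemidef]
  exact cfc_nonneg fun x _ => Real.sqrt_nonneg x

section RCLike

variable {𝕜 : Type*} [RCLike 𝕜]

theorem _root_.Matrix.re_trace_mul_conjTranspose_sq_le (A B : Matrix n n 𝕜) :
    RCLike.re (A * Bᴴ).trace ^ 2 ≤ RCLike.re (A * Aᴴ).trace * RCLike.re (B * Bᴴ).trace := by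
  let _ := toMatrixSeminormedAddCommGroup (1 : Matrix n n 𝕜) PosSemidef.one
  let _ := toMatrixInnerProductSpace (1 : Matrix n n 𝕜) PosSemidef.one
  have inner_eq (X Y : Matrix n n 𝕜) : inner 𝕜 X Y = (Y * Xᴴ).trace := by
    change (Y * 1 * Xᴴ).trace = _
    rw [mul_one]
  calc RCLike.re (A * Bᴴ).trace ^ 2 = |RCLike.re (inner 𝕜 B A)| ^ 2 := by rw [inner_eq, sq_abs]
    _ ≤ (‖B‖ * ‖A‖) ^ 2 := by
      gcongr
      exact (RCLike.abs_re_le_norm _).trans (norm_inner_le_norm _ _)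
    _ = _ := by
      rw [mul_pow, norm_sq_eq_re_inner (𝕜 := 𝕜), norm_sq_eq_re_inner (𝕜 := 𝕜), inner_eq, inner_eq,
        mul_comm]

open scoped MatrixOrder in
theorem _root_.Matrix.PosSemidef.sq_re_trace_mul_self_mul_le {S Q : Matrix n n 𝕜}
    (hS : S.PosSemidef) (hQ : Q.IsHermitian) :
    RCLike.re (S * S * Q).trace ^ 2 ≤
      RCLike.re (S * Q * S * Q).trace * RCLike.re (S * S).trace := by
  obtain ⟨B, rfl⟩ := CStarAlgebra.nonneg_iff_eq_star_mul_self.mp hS.nonneg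
  rw [star_eq_conjTranspose]
  have hQ' : Qᴴ = Q := hQ
  have cs := re_trace_mul_conjTranspose_sq_le (B * Q * Bᴴ) (B * Bᴴ)
  simp only [conjTranspose_mul, conjTranspose_conjTranspose, hQ'] at cs
  have hXY : (B * Q * Bᴴ * (B * Bᴴ)).trace = (Bᴴ * B * (Bᴴ * B) * Q).trace := by
    rw [trace_mul_comm _ Q]
    simp only [mul_assoc]
    rw [trace_mul_comm B]
    simp only [mul_assoc]
  have hXX : (B * Q * Bᴴ * (B * (Q * Bᴴ))).trace = (Bᴴ * B * Q * (Bᴴ * B) * Q).trace := by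
    rw [trace_mul_comm _ Q]
    simp only [mul_assoc]
    rw [trace_mul_comm B]
    simp only [mul_assoc]
  have hYY : (B * Bᴴ * (B * Bᴴ)).trace = (Bᴴ * B * (Bᴴ * B)).trace := by
    rw [mul_assoc, trace_mul_comm B]
    simp only [mul_assoc]
  rwa [hXY, hXX, hYY] at cs

end RCLike

/-- `Tr(√ρ Q √ρ Q) ≥ [Tr(ρQ)]²` for Hermitian `Q`; consequently
for a Hermitian projector `Q`, the variance dominates the Wigner-Yanase skew
information. -/
theorem skewInformation_le_variance
    (ρ Q : Matrix n n ℂ) (hρ : IsDensityMatrix ρ) (hQ : Q.IsHermitian) :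
    (retr (ρ * Q)) ^ 2 ≤ retr (msqrt ρ * Q * msqrt ρ * Q) ∧
      (Q * Q = Q →
        retr (ρ * (Q * Q)) - retr (msqrt ρ * Q * msqrt ρ * Q) ≤
          retr (ρ * (Q * Q)) - (retr (ρ * Q)) ^ 2) := by
  obtain ⟨hρ, htr⟩ := hρ
  have key := (msqrt_posSemidef hρ).sq_re_trace_mul_self_mul_le hQ
  rw [msqrt_mul_self hρ, htr, RCLike.one_re, mul_one] at key
  exact ⟨key, fun _ => sub_le_sub_left key _⟩

end BlockCoherence
end
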